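/- arXiv:2203.03161 — 6 statements merged into one kernel-verified Lean document; each statement's English description precedes it below -/
import Mathlib

section
/- For any dual quaternion q, |Re(q)| ≤ |q|, where Re(q) is the dual number formed by the real parts of the standard and infinitesimal quaternion parts, |·| on dual numbers is the absolute value, |·| on dual quaternions is the magnitude, and ≤ is the lexicographic total order on dual numbers. -/
open TrivSqZeroExt DualNumber
open scoped Classical

noncomputable section

/-- Lexicographic order on dual numbers: `p ≤ q`. -/
def DualNumber.Le (p q : DualNumber ℝ) : Prop :=
  p.fst < q.fst ∨ (p.fst = q.fst ∧ p.snd ≤ q.snd)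

/-- Absolute value of a dual number. -/
def DualNumber.dabs (d : DualNumber ℝ) : DualNumber ℝ :=
  if d.fst ≠ 0 then inl |d.fst| + inl (Real.sign d.fst * d.snd) * eps
  else inl |d.snd| * eps

/-- Magnitude of a dual quaternion, a dual number. -/
def DualQuaternion.magnitude (q : DualNumber (Quaternion ℝ)) : DualNumber ℝ :=
  if q.fst ≠ 0 then
    inl ‖q.fst‖ +
      inl ((q.fst * star q.snd + q.snd * star q.fst).re / (2 * ‖q.fst‖)) * eps
  else inl ‖q.snd‖ * eps

/-- The real part of a dual quaternion, as a dual number. -/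
def DualQuaternion.re (q : DualNumber (Quaternion ℝ)) : DualNumber ℝ :=
  inl q.fst.re + inl q.snd.re * eps

lemma quat_abs_re_le_norm (a : Quaternion ℝ) : |a.re| ≤ ‖a‖ := by
  rw [abs_le]
  constructor <;>
    nlinarith [Quaternion.normSq_eq_norm_mul_self a, Quaternion.normSq_def' a,
      sq_nonneg a.imI, sq_nonneg a.imJ, sq_nonneg a.imK, norm_nonneg a,
      sq_nonneg (a.re + ‖a‖), sq_nonneg (a.re - ‖a‖)]

lemma real_sign_mul_abs (r : ℝ) : Real.sign r * |r| = r := by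
  rcases lt_trichotomy r 0 with h | h | h
  · rw [Real.sign_of_neg h, abs_of_neg h]; ring
  · simp [h]
  · rw [Real.sign_of_pos h, abs_of_pos h]; ring

lemma aux_fst (x y : ℝ) : (inl x + inl y * eps : DualNumber ℝ).fst = x := by simp

lemma aux_snd (x y : ℝ) : (inl x + inl y * eps : DualNumber ℝ).snd = y := by
  rw [snd_add, DualNumber.snd_mul]; simp

lemma aux_fst' (y : ℝ) : (inl y * eps : DualNumber ℝ).fst = 0 := by simp

lemma aux_snd' (y : ℝ) : (inl y * eps : DualNumber ℝ).snd = y := by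
  rw [DualNumber.snd_mul]; simp

/-- For any dual quaternion `q`, `|Re(q)| ≤ |q|`. -/
theorem dualQuaternion_abs_re_le_magnitude (q : DualNumber (Quaternion ℝ)) :
    DualNumber.Le (DualNumber.dabs (DualQuaternion.re q)) (DualQuaternion.magnitude q) := by
  set a := q.fst with ha
  set b := q.snd with hb
  have hre_fst : (DualQuaternion.re q).fst = a.re := by
    rw [DualQuaternion.re, aux_fst]
  have hre_snd : (DualQuaternion.re q).snd = b.re := by
    rw [DualQuaternion.re, aux_snd]
  by_cases h0 : a = 0
  · -- a = 0
    rw [DualQuaternion.magnitude, if_neg (by simp [← ha, h0]),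
      DualNumber.dabs, if_neg (by simp [hre_fst, h0]; rfl)]
    right
    rw [hre_snd, aux_fst', aux_fst', aux_snd', aux_snd']
    exact ⟨rfl, quat_abs_re_le_norm b⟩
  · rw [DualQuaternion.magnitude, if_pos (by simpa [← ha] using h0)]
    by_cases hr : a.re = 0
    · -- a.re = 0 but a ≠ 0 : strict inequality in first component
      rw [DualNumber.dabs, if_neg (by simp [hre_fst, hr])]
      left
      rw [aux_fst', aux_fst]
      exact norm_pos_iff.mpr h0
    · rw [DualNumber.dabs, if_pos (by simp [hre_fst, hr])]
      rw [hre_fst, hre_snd]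
      rcases lt_or_eq_of_le (quat_abs_re_le_norm a) with hlt | heq
      · left
        rw [aux_fst, aux_fst]
        exact hlt
      · -- |a.re| = ‖a‖ : imaginary parts vanish
        right
        rw [aux_fst, aux_fst, aux_snd, aux_snd]
        refine ⟨heq, ?_⟩
        have hsq : a.imI ^ 2 + a.imJ ^ 2 + a.imK ^ 2 = 0 := by
          have h2 : ‖a‖ * ‖a‖ = a.re * a.re := by
            rw [← heq, abs_mul_abs_self]
          nlinarith [Quaternion.normSq_eq_norm_mul_self a, Quaternion.normSq_def' a]
        have hI : a.imI = 0 := by nlinarith [sq_nonneg a.imI, sq_nonneg a.imJ, sq_nonneg a.imK]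
        have hJ : a.imJ = 0 := by nlinarith [sq_nonneg a.imI, sq_nonneg a.imJ, sq_nonneg a.imK]
        have hK : a.imK = 0 := by nlinarith [sq_nonneg a.imI, sq_nonneg a.imJ, sq_nonneg a.imK]
        have hnum : (a * star b + b * star a).re = 2 * (a.re * b.re) := by
          simp [Quaternion.re_mul, hI, hJ, hK]
          ring
        rw [hnum, ← heq]
        have habs : |a.re| ≠ 0 := abs_ne_zero.mpr hr
        rw [le_div_iff₀ (by positivity)]
        apply le_of_eq
        linear_combination (2 * b.re) * real_sign_mul_abs a.re

end
end

section
/- If a set of dual quaternion vectors {u⁽¹⁾, …, u⁽ⁿ⁾} in DQ^m is right appreciably linearly independent, then it is right linearly independent: Σᵢ u⁽ⁱ⁾ αᵢ = 0 with dual quaternion scalars αᵢ implies all αᵢ = 0. -/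
/-!
Applied to `α`, appreciable independence makes every `αᵢ` infinitesimal, `αᵢ = bᵢ ε`.
The dual part of `∑ uᵢ αᵢ` is then the standard part of `∑ uᵢ bᵢ`, so applying appreciable
independence to the scalars `bᵢ` shows that they vanish as well.
-/

open TrivSqZeroExt DualNumber

theorem DualNumber.snd_sum_mul_eq_fst_sum_mul_inl {R ι : Type*} [Semiring R] (s : Finset ι)
    (u α : ι → R[ε]) (hα : ∀ i ∈ s, (α i).fst = 0) :
    (∑ i ∈ s, u i * α i).snd = (∑ i ∈ s, u i * inl (α i).snd).fst := by
  rw [snd_sum, fst_sum]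
  refine Finset.sum_congr rfl fun i hi => ?_
  simp [hα i hi]

/-- If a family of dual quaternion vectors is right appreciably linearly independent,
then it is right linearly independent. -/
theorem rightLinearIndependent_of_appreciablyLinearIndependent
    {m n : ℕ} (u : Fin n → Fin m → DualNumber (Quaternion ℝ))
    (h : ∀ α : Fin n → DualNumber (Quaternion ℝ),
        (∀ j, (∑ i, u i j * α i).fst = 0) → ∀ i, (α i).fst = 0) :
    ∀ α : Fin n → DualNumber (Quaternion ℝ),
        (∀ j, (∑ i, u i j * α i) = 0) → ∀ i, α i = 0 := by
  intro α hα
  have hst : ∀ i, (α i).fst = 0 := h α fun j => by rw [hα j, fst_zero]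
  have hinf : ∀ j, (∑ i, u i j * inl (α i).snd).fst = 0 := fun j => by
    rw [← snd_sum_mul_eq_fst_sum_mul_inl _ _ _ fun i _ => hst i, hα j, snd_zero]
  intro i
  exact TrivSqZeroExt.ext (hst i) (h _ hinf i)
end

section
/- Let A and B be m×m dual quaternion matrices. If AB = I, then BA = I. -/
open TrivSqZeroExt DualNumber
open Matrix in

theorem quatMatrix_mul_eq_one_comm {H : Type*} [DivisionRing H] {m : ℕ}
    (A B : Matrix (Fin m) (Fin m) H) (h : A * B = 1) : B * A = 1 := by
  have hcomp : B.vecMulLinear * A.vecMulLinear = 1 := by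
    apply LinearMap.ext; intro v
    show (v ᵥ* A) ᵥ* B = v
    rw [Matrix.vecMul_vecMul, h, Matrix.vecMul_one]
  have h2 : A.vecMulLinear * B.vecMulLinear = 1 :=
    (mul_eq_one_comm).mpr hcomp
  ext i j
  have h3 := LinearMap.congr_fun h2 (Pi.single i 1)
  have h4 : (Pi.single i 1 ᵥ* B) ᵥ* A = Pi.single i 1 := h3
  rw [Matrix.vecMul_vecMul] at h4
  have := congrFun h4 j
  simpa [Matrix.vecMul, dotProduct, Pi.single_apply, Matrix.one_apply, eq_comm,
    Finset.sum_ite_eq] using this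

section DQ
variable {m : ℕ}
local notation "H" => Quaternion ℝ

theorem mapFst_mul (M N : Matrix (Fin m) (Fin m) (DualNumber H)) :
    (M * N).map fst = M.map fst * N.map fst := by
  refine Matrix.ext fun i j => ?_
  simp [Matrix.mul_apply, Matrix.map_apply, TrivSqZeroExt.fst_sum, TrivSqZeroExt.fst_mul]

theorem mapSnd_mul (M N : Matrix (Fin m) (Fin m) (DualNumber H)) :
    (M * N).map snd = M.map fst * N.map snd + M.map snd * N.map fst := by
  refine Matrix.ext fun i j => ?_
  simp [Matrix.mul_apply, Matrix.map_apply, TrivSqZeroExt.snd_sum, TrivSqZeroExt.snd_mul,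
    smul_eq_mul, MulOpposite.smul_eq_mul_unop, Finset.sum_add_distrib]

theorem mapFst_one : (1 : Matrix (Fin m) (Fin m) (DualNumber H)).map fst = 1 := by
  refine Matrix.ext fun i j => ?_
  simp [Matrix.one_apply, Matrix.map_apply, apply_ite]

theorem mapSnd_one : (1 : Matrix (Fin m) (Fin m) (DualNumber H)).map snd = 0 := by
  refine Matrix.ext fun i j => ?_
  simp [Matrix.one_apply, Matrix.map_apply, apply_ite]

end DQ

/-- For square dual quaternion matrices, `A B = I` implies `B A = I`. -/
theorem dualQuaternionMatrix_mul_eq_one_comm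
    {m : ℕ} (A B : Matrix (Fin m) (Fin m) (DualNumber (Quaternion ℝ)))
    (h : A * B = 1) : B * A = 1 := by
  set A0 := A.map fst with hA0
  set B0 := B.map fst with hB0
  set A1 := A.map snd with hA1
  set B1 := B.map snd with hB1
  have h0 : A0 * B0 = 1 := by rw [hA0, hB0, ← mapFst_mul, h, mapFst_one]
  have h1 : A0 * B1 + A1 * B0 = 0 := by
    rw [hA0, hB0, hA1, hB1, ← mapSnd_mul, h, mapSnd_one]
  have hB0A0 : B0 * A0 = 1 := quatMatrix_mul_eq_one_comm _ _ h0
  have e1 : B0 * ((A0 * B1) * A0) + B0 * ((A1 * B0) * A0) = B1 * A0 + B0 * A1 := by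
    rw [← mul_assoc B0 (A0 * B1) A0, ← mul_assoc B0 A0 B1, hB0A0, one_mul,
      mul_assoc A1 B0 A0, hB0A0, mul_one]
  have key : B1 * A0 + B0 * A1 = 0 := by
    rw [← e1, ← mul_add, ← add_mul, h1, zero_mul, mul_zero]
  refine Matrix.ext fun i j => TrivSqZeroExt.ext ?_ ?_
  · have h' : (B * A).map fst = (1 : Matrix (Fin m) (Fin m) (DualNumber (Quaternion ℝ))).map fst := by
      rw [mapFst_mul, ← hB0, ← hA0, hB0A0, mapFst_one]
    simpa [Matrix.map_apply] using congrFun (congrFun h' i) j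
  · have h' : (B * A).map snd = (1 : Matrix (Fin m) (Fin m) (DualNumber (Quaternion ℝ))).map snd := by
      rw [mapSnd_mul, ← hB0, ← hA0, ← hB1, ← hA1, mapSnd_one, add_comm, key]
    simpa [Matrix.map_apply] using congrFun (congrFun h' i) j
end

section
/- A square dual quaternion matrix A is invertible if and only if its quaternion adjoint matrix χ_A = [[A_st, 0],[A_I, A_st]] is invertible. -/
open TrivSqZeroExt DualNumber Matrix

variable {m : ℕ}

/-- One-sided inverses of quaternion matrices are two-sided. -/
lemma quatMatrix_mul_eq_one_comm_s15 {F G : Matrix (Fin m) (Fin m) (Quaternion ℝ)}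
    (h : F * G = 1) : G * F = 1 := by
  have h1 : LinearMap.mulLeft ℝ F * LinearMap.mulLeft ℝ G = 1 := by
    rw [Module.End.mul_eq_comp, ← LinearMap.mulLeft_mul, h, LinearMap.mulLeft_one]
    rfl
  rw [mul_eq_one_comm] at h1
  have := congrFun (congrArg DFunLike.coe h1) 1
  simpa [LinearMap.mulLeft] using this

/-- Block-triangular criterion. -/
lemma fromBlocks_isUnit_iff (F S : Matrix (Fin m) (Fin m) (Quaternion ℝ)) :
    IsUnit (fromBlocks F 0 S F) ↔ IsUnit F := by
  constructor
  · rintro ⟨u, hu⟩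
    obtain ⟨v, w, hvw, hwv⟩ := u
    dsimp at hu
    subst hu
    rw [← fromBlocks_toBlocks w, fromBlocks_multiply] at hvw
    have h11 := congrArg Matrix.toBlocks₁₁ hvw
    simp only [toBlocks_fromBlocks₁₁, Matrix.zero_mul, add_zero] at h11
    rw [show (1 : Matrix (Fin m ⊕ Fin m) (Fin m ⊕ Fin m) (Quaternion ℝ)) =
      fromBlocks 1 0 0 1 from (fromBlocks_one ..).symm, toBlocks_fromBlocks₁₁] at h11
    exact ⟨⟨F, _, h11, quatMatrix_mul_eq_one_comm_s15 h11⟩, rfl⟩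
  · rintro ⟨⟨F', G, hFG, hGF⟩, hu⟩
    replace hu : F' = F := hu
    subst hu
    refine ⟨⟨fromBlocks F' 0 S F', fromBlocks G 0 (-(G * S * G)) G, ?_, ?_⟩, rfl⟩
    · rw [fromBlocks_multiply]
      rw [show (1 : Matrix (Fin m ⊕ Fin m) (Fin m ⊕ Fin m) (Quaternion ℝ)) =
        fromBlocks 1 0 0 1 from (fromBlocks_one ..).symm]
      congr 1 <;> simp [hFG, ← Matrix.mul_assoc]
    · rw [fromBlocks_multiply]
      rw [show (1 : Matrix (Fin m ⊕ Fin m) (Fin m ⊕ Fin m) (Quaternion ℝ)) =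
        fromBlocks 1 0 0 1 from (fromBlocks_one ..).symm]
      congr 1 <;> simp [hGF, Matrix.mul_assoc]

/-- Matrices over dual quaternions are dual numbers over quaternion matrices. -/
def dnEquiv : Matrix (Fin m) (Fin m) (DualNumber (Quaternion ℝ)) ≃+*
    DualNumber (Matrix (Fin m) (Fin m) (Quaternion ℝ)) where
  toFun A := ⟨of fun i j => (A i j).fst, of fun i j => (A i j).snd⟩
  invFun d := of fun i j => (d.fst i j, d.snd i j)
  left_inv _ := Matrix.ext fun _ _ => TrivSqZeroExt.ext rfl rfl
  right_inv _ := TrivSqZeroExt.ext (Matrix.ext fun _ _ => rfl) (Matrix.ext fun _ _ => rfl)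
  map_mul' A B := by
    refine TrivSqZeroExt.ext (Matrix.ext fun i j => ?_) (Matrix.ext fun i j => ?_)
    · dsimp [Matrix.mul_apply]
      simp_rw [fst_sum]
      rfl
    · show snd ((A * B) i j) = _
      show _ = (Matrix.of (fun i j => fst (A i j)) * Matrix.of (fun i j => snd (B i j)) +
        Matrix.of (fun i j => snd (A i j)) * Matrix.of (fun i j => fst (B i j))) i j
      simp only [Matrix.mul_apply, snd_sum, DualNumber.snd_mul, snd_mk, of_apply, fst_mk,
        Matrix.add_apply]
      rw [← Finset.sum_add_distrib]
  map_add' _ _ := TrivSqZeroExt.ext rfl rfl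

/-- The quaternion adjoint `χ_A = [[A_st, 0], [A_I, A_st]]` of a dual quaternion matrix. -/
noncomputable def chiAdj {m : ℕ} (A : Matrix (Fin m) (Fin m) (DualNumber (Quaternion ℝ))) :
    Matrix (Fin m ⊕ Fin m) (Fin m ⊕ Fin m) (Quaternion ℝ) :=
  Matrix.fromBlocks (A.map TrivSqZeroExt.fst) 0 (A.map TrivSqZeroExt.snd)
    (A.map TrivSqZeroExt.fst)

/-- A square dual quaternion matrix is invertible iff its quaternion adjoint is invertible. -/
theorem dualQuaternionMatrix_isUnit_iff_chiAdj_isUnit {m : ℕ}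
    (A : Matrix (Fin m) (Fin m) (DualNumber (Quaternion ℝ))) :
    IsUnit A ↔ IsUnit (chiAdj A) := by
  have h1 : IsUnit A ↔ IsUnit (dnEquiv A) := by
    constructor
    · exact fun h => h.map dnEquiv
    · intro h
      have := h.map (dnEquiv (m := m)).symm
      simpa using this
  rw [h1, isUnit_iff_isUnit_fst]
  have h2 : (dnEquiv A).fst = A.map TrivSqZeroExt.fst := rfl
  rw [h2, chiAdj]
  exact (fromBlocks_isUnit_iff (A.map TrivSqZeroExt.fst) (A.map TrivSqZeroExt.snd)).symm
end

section
/- If A is an invertible m×m dual quaternion matrix and λ is a right eigenvalue of A with appreciable right eigenvector x, then λ is invertible and λ^{-1} is a right eigenvalue of A^{-1} with the same eigenvector x: A^{-1} x = x λ^{-1}. -/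
/-!
Applying `A⁻¹` to `A x = x λ` gives `x = (A⁻¹ x) λ`. Taking standard parts at a coordinate where
`x` is appreciable shows `λ_st ≠ 0`, so `λ` is a unit among dual quaternions, and multiplying on
the right by `λ⁻¹` gives `A⁻¹ x = x λ⁻¹`.
-/

open TrivSqZeroExt DualNumber

theorem Matrix.mulVec_mul_right {R ι κ : Type*} [Semiring R] [Fintype κ]
    (B : Matrix ι κ R) (x : κ → R) (c : R) :
    B.mulVec (fun i => x i * c) = fun i => B.mulVec x i * c :=
  B.mulVec_smul (MulOpposite.op c) x

theorem Matrix.eq_mulVec_mul_of_mulVec_eq_mul {R ι : Type*} [Semiring R] [Fintype ι]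
    [DecidableEq ι] {A B : Matrix ι ι R} {x : ι → R} {c : R}
    (hBA : B * A = 1) (heig : A.mulVec x = fun i => x i * c) :
    x = fun i => B.mulVec x i * c := by
  rw [← B.mulVec_mul_right, ← heig, Matrix.mulVec_mulVec, hBA, Matrix.one_mulVec]

theorem TrivSqZeroExt.isUnit_of_fst_mul_ne_zero {R M : Type*} [DivisionSemiring R]
    [AddCommGroup M] [Module Rᵐᵒᵖ M] [Module R M] [SMulCommClass R Rᵐᵒᵖ M]
    {b c : TrivSqZeroExt R M} (h : (b * c).fst ≠ 0) : IsUnit c := by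
  rw [isUnit_iff_isUnit_fst, isUnit_iff_ne_zero]
  rintro hc
  rw [fst_mul, hc, mul_zero] at h
  exact h rfl

/-- If `A` is invertible and `λ` is a right eigenvalue of `A` with appreciable eigenvector `x`,
then `λ` is invertible and `A⁻¹ x = x λ⁻¹`. -/
theorem rightEigenvalue_inv {m : ℕ}
    (A : Matrix (Fin m) (Fin m) (DualNumber (Quaternion ℝ))) (hA : IsUnit A)
    (x : Fin m → DualNumber (Quaternion ℝ)) (lam : DualNumber (Quaternion ℝ))
    (hx : (fun i => (x i).fst) ≠ 0)
    (heig : A.mulVec x = fun i => x i * lam) :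
    IsUnit lam ∧
      ∀ B : Matrix (Fin m) (Fin m) (DualNumber (Quaternion ℝ)),
        A * B = 1 → B * A = 1 → B.mulVec x = fun i => x i * Ring.inverse lam := by
  obtain ⟨u, rfl⟩ := hA
  obtain ⟨i, hxi⟩ := Function.ne_iff.mp hx
  have hlam : IsUnit lam := by
    rw [congrFun (Matrix.eq_mulVec_mul_of_mulVec_eq_mul u.inv_mul heig) i] at hxi
    exact isUnit_of_fst_mul_ne_zero hxi
  refine ⟨hlam, fun B _ hBA => funext fun j => ?_⟩
  rw [Ring.eq_mul_inverse_iff_mul_eq _ _ _ hlam]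
  exact (congrFun (Matrix.eq_mulVec_mul_of_mulVec_eq_mul hBA heig) j).symm
end

section
/- (Cauchy–Schwarz inequality for dual quaternion vectors) For any u, v ∈ DQ^m, |⟨u, v⟩| ≤ ‖u‖ ‖v‖, where the inequality is in the lexicographic total order on dual numbers. -/
open TrivSqZeroExt DualNumber
open scoped Classical

noncomputable section

/-- Conjugate of a dual quaternion. -/
def DualQuaternion.conj (q : DualNumber (Quaternion ℝ)) : DualNumber (Quaternion ℝ) :=
  inl (star q.fst) + inl (star q.snd) * eps

/-- The dual quaternion-valued inner product `⟨u, v⟩ = ∑ᵢ v̄ᵢ uᵢ`. -/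
def DualQuaternion.inner {m : ℕ} (u v : Fin m → DualNumber (Quaternion ℝ)) :
    DualNumber (Quaternion ℝ) :=
  ∑ i, DualQuaternion.conj (v i) * u i

/-- The dual-number norm of a dual quaternion vector. -/
def DualQuaternion.norm {m : ℕ} (x : Fin m → DualNumber (Quaternion ℝ)) : DualNumber ℝ :=
  if (fun i => (x i).fst) ≠ (0 : Fin m → Quaternion ℝ) then
    inl (Real.sqrt (∑ i, ‖(x i).fst‖ ^ 2)) +
      inl ((∑ i, (star ((x i).snd) * (x i).fst + star ((x i).fst) * (x i).snd)).re /
        (2 * Real.sqrt (∑ i, ‖(x i).fst‖ ^ 2))) * eps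
  else inl (Real.sqrt (∑ i, ‖(x i).snd‖ ^ 2)) * eps

section Aux
open Finset RealInnerProductSpace
local notation "ℍ" => Quaternion ℝ

lemma re_sum {m : ℕ} (f : Fin m → ℍ) : (∑ i, f i).re = ∑ i, (f i).re :=
  map_sum (QuaternionAlgebra.reₗ (R:=ℝ) (-1) (0) (-1)) f univ

lemma re_mul_comm (a b : ℍ) : (a * b).re = (b * a).re := by
  simp [Quaternion.re_mul]; ring

lemma inner_eq (a b : ℍ) : (inner ℝ a b : ℝ) = (a * star b).re := Quaternion.inner_def a b

lemma sumsq_pos {m : ℕ} {x : Fin m → ℍ} (h : x ≠ 0) : 0 < ∑ i, ‖x i‖^2 := by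
  obtain ⟨i, hi⟩ := Function.ne_iff.mp h
  exact Finset.sum_pos' (fun j _ => by positivity) ⟨i, Finset.mem_univ i, pow_pos (norm_pos_iff.mpr hi) 2⟩

lemma quatCS {m : ℕ} (a b : Fin m → ℍ) :
    ‖∑ i, star (b i) * a i‖ ≤ Real.sqrt (∑ i, ‖a i‖^2) * Real.sqrt (∑ i, ‖b i‖^2) := by
  calc ‖∑ i, star (b i) * a i‖ ≤ ∑ i, ‖star (b i) * a i‖ := norm_sum_le _ _
    _ = ∑ i, ‖a i‖ * ‖b i‖ := by simp [norm_mul, mul_comm]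
    _ ≤ Real.sqrt (∑ i, ‖a i‖^2) * Real.sqrt (∑ i, ‖b i‖^2) := by
        rw [← Real.sqrt_mul (by positivity)]
        rw [show ∑ i, ‖a i‖ * ‖b i‖ = Real.sqrt ((∑ i, ‖a i‖ * ‖b i‖)^2) from
          (Real.sqrt_sq (by positivity)).symm]
        exact Real.sqrt_le_sqrt (Finset.sum_mul_sq_le_sq_mul_sq _ _ _)

lemma hasDeriv_sqrtsum {m : ℕ} (x y : Fin m → ℍ) (h : x ≠ 0) :
    HasDerivAt (fun t : ℝ => Real.sqrt (∑ i, ‖x i + t • y i‖^2))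
      ((∑ i, (star (y i) * x i + star (x i) * y i).re) / (2 * Real.sqrt (∑ i, ‖x i‖^2))) 0 := by
  have hq : ∀ i : Fin m, HasDerivAt (fun t : ℝ => x i + t • y i) (y i) 0 := fun i => by
    simpa using ((hasDerivAt_id (0:ℝ)).smul_const (y i)).const_add (x i)
  have hinner : ∀ i : Fin m, HasDerivAt (fun t : ℝ => (inner ℝ (x i + t • y i) (x i + t • y i) : ℝ))
      ((inner ℝ (x i) (y i) : ℝ) + (inner ℝ (y i) (x i) : ℝ)) 0 := fun i => by
    simpa using HasDerivAt.inner ℝ (hq i) (hq i)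
  have hsum : HasDerivAt (fun t : ℝ => ∑ i, (inner ℝ (x i + t • y i) (x i + t • y i) : ℝ))
      (∑ i, ((inner ℝ (x i) (y i) : ℝ) + (inner ℝ (y i) (x i) : ℝ))) 0 :=
    HasDerivAt.fun_sum fun i _ => hinner i
  have hval : ∀ t : ℝ, (∑ i, (inner ℝ (x i + t • y i) (x i + t • y i) : ℝ)) = ∑ i, ‖x i + t • y i‖^2 := by
    intro t; simp [real_inner_self_eq_norm_sq]
  have hne : (∑ i, (inner ℝ (x i + (0:ℝ) • y i) (x i + (0:ℝ) • y i) : ℝ)) ≠ 0 := by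
    simp only [zero_smul, add_zero, real_inner_self_eq_norm_sq]
    exact ne_of_gt (sumsq_pos h)
  have := hsum.sqrt hne
  have heq : (fun t : ℝ => Real.sqrt (∑ i, (inner ℝ (x i + t • y i) (x i + t • y i) : ℝ)))
      = fun t : ℝ => Real.sqrt (∑ i, ‖x i + t • y i‖^2) := by
    funext t; rw [hval t]
  rw [heq] at this
  convert this using 2
  · apply Finset.sum_congr rfl; intro i _
    rw [inner_eq, inner_eq, ← re_mul_comm (star (y i)) (x i), ← re_mul_comm (star (x i)) (y i)]
    simp
  · simp [real_inner_self_eq_norm_sq]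

lemma hasDeriv_qnorm (A B C : ℍ) (hA : A ≠ 0) :
    HasDerivAt (fun t : ℝ => ‖A + t • B + (t*t) • C‖)
      ((A * star B + B * star A).re / (2 * ‖A‖)) 0 := by
  have hq : HasDerivAt (fun t : ℝ => A + t • B + (t*t) • C) B 0 := by
    have h1 : HasDerivAt (fun t : ℝ => A + t • B) B 0 := by
      simpa using ((hasDerivAt_id (0:ℝ)).smul_const B).const_add A
    have h2 : HasDerivAt (fun t : ℝ => (t*t) • C) (0:ℍ) 0 := by
      simpa using ((hasDerivAt_id (0:ℝ)).mul (hasDerivAt_id (0:ℝ))).smul_const C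
    simpa using h1.fun_add h2
  have hinner : HasDerivAt (fun t : ℝ => (inner ℝ (A + t • B + (t*t) • C) (A + t • B + (t*t) • C) : ℝ))
      ((inner ℝ A B : ℝ) + (inner ℝ B A : ℝ)) 0 := by
    simpa using HasDerivAt.inner ℝ hq hq
  have hne : (inner ℝ (A + (0:ℝ) • B + ((0:ℝ)*(0:ℝ)) • C) (A + (0:ℝ) • B + ((0:ℝ)*(0:ℝ)) • C) : ℝ) ≠ 0 := by
    simp [real_inner_self_eq_norm_sq, pow_eq_zero_iff, hA]
  have := hinner.sqrt hne
  have heq : (fun t : ℝ => Real.sqrt (inner ℝ (A + t • B + (t*t) • C) (A + t • B + (t*t) • C) : ℝ))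
      = fun t : ℝ => ‖A + t • B + (t*t) • C‖ := by
    funext t; rw [real_inner_self_eq_norm_sq, Real.sqrt_sq (norm_nonneg _)]
  rw [heq] at this
  convert this using 2
  · simp [inner_eq]
  simp only [zero_smul, add_zero, zero_mul]
  rw [real_inner_self_eq_norm_sq, Real.sqrt_sq (norm_nonneg _)]

lemma star_smul' (t : ℝ) (x : ℍ) : star (t • x) = t • star x := by
  simp [star_smul]

lemma expand_inner {m : ℕ} (us uI vs vI : Fin m → ℍ) (t : ℝ) :
    ∑ i, star (vs i + t • vI i) * (us i + t • uI i)
      = (∑ i, star (vs i) * us i) + t • (∑ i, (star (vs i) * uI i + star (vI i) * us i))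
        + (t*t) • (∑ i, star (vI i) * uI i) := by
  rw [Finset.smul_sum, Finset.smul_sum, ← Finset.sum_add_distrib, ← Finset.sum_add_distrib]
  apply Finset.sum_congr rfl
  intro i _
  simp only [star_add, star_smul', add_mul, mul_add, smul_mul_assoc,
    mul_smul_comm, smul_smul, smul_add]
  abel

lemma eps_case {m : ℕ} (us uI vs vI : Fin m → ℍ) (hu : us ≠ 0) (hv : vs ≠ 0)
    (hA : (∑ i, star (vs i) * us i) ≠ 0)
    (heq : ‖∑ i, star (vs i) * us i‖
      = Real.sqrt (∑ i, ‖us i‖^2) * Real.sqrt (∑ i, ‖vs i‖^2)) :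
    ((∑ i, star (vs i) * us i) * star (∑ i, (star (vs i) * uI i + star (vI i) * us i))
      + (∑ i, (star (vs i) * uI i + star (vI i) * us i)) * star (∑ i, star (vs i) * us i)).re
      / (2 * ‖∑ i, star (vs i) * us i‖)
    ≤ Real.sqrt (∑ i, ‖us i‖^2) *
        ((∑ i, (star (vI i) * vs i + star (vs i) * vI i)).re / (2 * Real.sqrt (∑ i, ‖vs i‖^2)))
      + ((∑ i, (star (uI i) * us i + star (us i) * uI i)).re / (2 * Real.sqrt (∑ i, ‖us i‖^2)))
        * Real.sqrt (∑ i, ‖vs i‖^2) := by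
  set A := ∑ i, star (vs i) * us i with hAdef
  set B := ∑ i, (star (vs i) * uI i + star (vI i) * us i) with hBdef
  set C := ∑ i, star (vI i) * uI i with hCdef
  have hg := hasDeriv_qnorm A B C hA
  have hu' := hasDeriv_sqrtsum us uI hu
  have hv' := hasDeriv_sqrtsum vs vI hv
  have hh := hu'.mul hv'
  simp only [zero_smul, add_zero] at hh
  have hle : ∀ t : ℝ, ‖A + t • B + (t*t) • C‖
      ≤ Real.sqrt (∑ i, ‖us i + t • uI i‖^2) * Real.sqrt (∑ i, ‖vs i + t • vI i‖^2) := by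
    intro t
    rw [hAdef, hBdef, hCdef, ← expand_inner]
    exact quatCS _ _
  have h0 : (fun t : ℝ => Real.sqrt (∑ i, ‖us i + t • uI i‖^2)
        * Real.sqrt (∑ i, ‖vs i + t • vI i‖^2) - ‖A + t • B + (t*t) • C‖) 0 = 0 := by
    simp only [zero_smul, add_zero, mul_zero, zero_mul]
    rw [heq]; ring
  have hmin : IsLocalMin (fun t : ℝ => Real.sqrt (∑ i, ‖us i + t • uI i‖^2)
      * Real.sqrt (∑ i, ‖vs i + t • vI i‖^2) - ‖A + t • B + (t*t) • C‖) 0 :=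
    Filter.Eventually.of_forall fun t => by
      rw [h0]; have := hle t; dsimp only; linarith
  have hzero := hmin.hasDerivAt_eq_zero (hh.sub hg)
  have hderiv_eq :
      (A * star B + B * star A).re / (2 * ‖A‖)
      = (∑ i, (star (uI i) * us i + star (us i) * uI i).re) / (2 * Real.sqrt (∑ i, ‖us i‖^2))
          * Real.sqrt (∑ i, ‖vs i‖^2)
        + Real.sqrt (∑ i, ‖us i‖^2) *
          ((∑ i, (star (vI i) * vs i + star (vs i) * vI i).re) / (2 * Real.sqrt (∑ i, ‖vs i‖^2))) := by
    linarith [sub_eq_zero.mp hzero]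
  rw [re_sum, re_sum]
  rw [hderiv_eq]
  ring_nf
  try linarith
end Aux

set_option maxHeartbeats 2000000 in
/-- Cauchy–Schwarz inequality for dual quaternion vectors: `|⟨u,v⟩| ≤ ‖u‖ ‖v‖`. -/

theorem dualQuaternion_cauchy_schwarz {m : ℕ} (u v : Fin m → DualNumber (Quaternion ℝ)) :
    DualNumber.Le (DualQuaternion.magnitude (DualQuaternion.inner u v))
      (DualQuaternion.norm u * DualQuaternion.norm v) := by
  have hifst : (DualQuaternion.inner u v).fst = ∑ i, star ((v i).fst) * (u i).fst := by
    simp [DualQuaternion.inner, DualQuaternion.conj, TrivSqZeroExt.fst_sum]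
  have hisnd : (DualQuaternion.inner u v).snd
      = ∑ i, (star ((v i).fst) * (u i).snd + star ((v i).snd) * (u i).fst) := by
    simp [DualQuaternion.inner, DualQuaternion.conj, TrivSqZeroExt.snd_sum, smul_eq_mul]
  by_cases hU : (fun i => (u i).fst) = (0 : Fin m → Quaternion ℝ)
  · have hUi : ∀ i, (u i).fst = 0 := fun i => congrFun hU i
    have hifst0 : (DualQuaternion.inner u v).fst = 0 := by simp [hifst, hUi]
    rw [DualQuaternion.norm, if_neg (not_not.mpr hU), DualQuaternion.magnitude,
      if_neg (not_not.mpr hifst0)]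
    refine Or.inr ⟨by simp, ?_⟩
    by_cases hV : (fun i => (v i).fst) = (0 : Fin m → Quaternion ℝ)
    · have hVi : ∀ i, (v i).fst = 0 := fun i => congrFun hV i
      have hisnd0 : (DualQuaternion.inner u v).snd = 0 := by simp [hisnd, hUi, hVi]
      rw [DualQuaternion.norm, if_neg (not_not.mpr hV)]
      simp [hisnd0]
    · rw [DualQuaternion.norm, if_pos hV]
      have key := quatCS (fun i => (u i).snd) (fun i => (v i).fst)
      have hisnd' : (DualQuaternion.inner u v).snd = ∑ i, star ((v i).fst) * (u i).snd := by
        simp [hisnd, hUi]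
      simp only [hisnd']
      simpa using key
  · by_cases hV : (fun i => (v i).fst) = (0 : Fin m → Quaternion ℝ)
    · have hVi : ∀ i, (v i).fst = 0 := fun i => congrFun hV i
      have hifst0 : (DualQuaternion.inner u v).fst = 0 := by simp [hifst, hVi]
      rw [DualQuaternion.norm, if_pos hU, DualQuaternion.norm, if_neg (not_not.mpr hV),
        DualQuaternion.magnitude, if_neg (not_not.mpr hifst0)]
      refine Or.inr ⟨by simp, ?_⟩
      have key := quatCS (fun i => (u i).fst) (fun i => (v i).snd)
      have hisnd' : (DualQuaternion.inner u v).snd = ∑ i, star ((v i).snd) * (u i).fst := by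
        simp [hisnd, hVi]
      simp only [hisnd']
      simpa using key
    · have hCS := quatCS (fun i => (u i).fst) (fun i => (v i).fst)
      by_cases hA : (∑ i, star ((v i).fst) * (u i).fst) = 0
      · have hifst0 : (DualQuaternion.inner u v).fst = 0 := by rw [hifst]; exact hA
        rw [DualQuaternion.norm, if_pos hU, DualQuaternion.norm, if_pos hV,
          DualQuaternion.magnitude, if_neg (not_not.mpr hifst0)]
        refine Or.inl ?_
        simp only [TrivSqZeroExt.fst_mul, TrivSqZeroExt.fst_add, TrivSqZeroExt.fst_inl]
        have h1 : (0:ℝ) < Real.sqrt (∑ i, ‖(u i).fst‖^2) := Real.sqrt_pos.mpr (sumsq_pos hU)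
        have h2 : (0:ℝ) < Real.sqrt (∑ i, ‖(v i).fst‖^2) := Real.sqrt_pos.mpr (sumsq_pos hV)
        simpa using mul_pos h1 h2
      · have hifstne : (DualQuaternion.inner u v).fst ≠ 0 := by rw [hifst]; exact hA
        rw [DualQuaternion.norm, if_pos hU, DualQuaternion.norm, if_pos hV,
          DualQuaternion.magnitude, if_pos hifstne]
        rcases lt_or_eq_of_le hCS with hlt | heq
        · refine Or.inl ?_
          simp only [TrivSqZeroExt.fst_mul, TrivSqZeroExt.fst_add, TrivSqZeroExt.fst_inl]
          simpa [hifst] using hlt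
        · refine Or.inr ⟨?_, ?_⟩
          · simp only [TrivSqZeroExt.fst_mul, TrivSqZeroExt.fst_add, TrivSqZeroExt.fst_inl]
            simpa [hifst] using heq
          · have key := eps_case (fun i => (u i).fst) (fun i => (u i).snd)
              (fun i => (v i).fst) (fun i => (v i).snd) hU hV hA heq
            simp only [TrivSqZeroExt.snd_mul, TrivSqZeroExt.snd_add, TrivSqZeroExt.snd_inl,
              TrivSqZeroExt.fst_mul, TrivSqZeroExt.fst_add, TrivSqZeroExt.fst_inl,
              hifst, hisnd, smul_eq_mul]
            simpa using key

end
end
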